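/- Let K be a division ring and (G,<) a nonabelian ordered group such that the group ring K[G] is an Ore domain, with Ore field of fractions D ⊆ K((G,<)). Then D is infinite-dimensional over its center. -/

import Mathlib

/-!
An element `c` of `K((G,<))` commuting with every `g ∈ G` has a conjugation-invariant
coefficient function. If its well-ordered support contained a non-central `w`, some `k` would
satisfy `k w k⁻¹ < w`, and the conjugates `kⁿ w k⁻ⁿ` would form an infinite descending chain
in the support; so central elements of `D` are supported on `Z(G)`. A bi-ordered group has
unique roots, hence `G ⧸ Z(G)` is torsion-free and the powers of a non-central `x` lie in
pairwise distinct cosets of `Z(G)`. Reading off the coefficient of `∑ cᵢ xⁱ` at `w xⁱ` for `w`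
in the support of `cᵢ` then isolates `cᵢ`, so the `xⁱ` are linearly independent over the
centre of `D`.
-/

open Function Subgroup

section TorsionFree
variable {G : Type*} [Group G] [IsMulTorsionFree G]

theorem Subgroup.mem_center_of_pow_mem_center {x : G} {n : ℕ} (hn : n ≠ 0)
    (h : x ^ n ∈ center G) : x ∈ center G := by
  refine mem_center_iff.mpr fun y => ?_
  have hconj : (y * x * y⁻¹) ^ n = x ^ n := by
    rw [conj_pow, mem_center_iff.mp h y, mul_inv_cancel_right]
  exact mul_inv_eq_iff_eq_mul.mp (IsMulTorsionFree.pow_left_injective hn hconj)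

theorem injective_pow_mk_center {x : G} (hx : x ∉ center G) :
    Injective fun n : ℕ => (x : G ⧸ center G) ^ n := by
  refine injective_pow_iff_not_isOfFinOrder.mpr fun hfin => hx ?_
  obtain ⟨n, hn, hpow⟩ := isOfFinOrder_iff_pow_eq_one.mp hfin
  rw [← QuotientGroup.mk_pow, QuotientGroup.eq_one_iff] at hpow
  exact mem_center_of_pow_mem_center hn.ne' hpow

end TorsionFree

section Ordered
variable {G : Type*} [Group G] [LinearOrder G]
    [CovariantClass G G (· * ·) (· ≤ ·)]
    [CovariantClass G G (Function.swap (· * ·)) (· ≤ ·)]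

theorem strictMono_conj (k : G) : StrictMono fun a : G => k * a * k⁻¹ :=
  fun _ _ h => mul_lt_mul_left (mul_lt_mul_right h k) k⁻¹

theorem exists_conj_lt_of_notMem_center {w : G} (hw : w ∉ center G) :
    ∃ k : G, k * w * k⁻¹ < w := by
  obtain ⟨g, hg⟩ : ∃ g : G, g * w * g⁻¹ ≠ w := by
    simpa [mem_center_iff, mul_inv_eq_iff_eq_mul] using hw
  rcases hg.lt_or_gt with hlt | hgt
  · exact ⟨g, hlt⟩
  · refine ⟨g⁻¹, ?_⟩
    simpa [mul_assoc] using strictMono_conj g⁻¹ hgt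

theorem support_subset_center_of_isWF {α : Type*} [Zero α] {F : G → α}
    (hwf : (support F).IsWF) (hF : ∀ g w, F (g * w * g⁻¹) = F w) :
    support F ⊆ center G := by
  intro w hw
  by_contra hwc
  obtain ⟨k, hk⟩ := exists_conj_lt_of_notMem_center hwc
  have hinv : ∀ n, F ((fun a => k * a * k⁻¹)^[n] w) = F w := fun n =>
    congrFun (iterate_invariant (funext (hF k)) n) w
  exact Set.isWF_iff_no_descending_seq.mp hwf _
    ((strictMono_conj k).strictAnti_iterate_of_map_lt hk)
    fun n => (mem_support.mpr ((hinv n).trans_ne hw))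

end Ordered

section Coefficients
variable {K G E : Type*} [Group G] [DecidableEq G] {coeff : E → G → K} {emb : G → E}

theorem coeff_mul_emb [Semiring K] [Mul E]
    (hmul : ∀ f g : E, ∀ z : G, coeff (f * g) z =
      ∑ᶠ p : G × G, if p.1 * p.2 = z then coeff f p.1 * coeff g p.2 else 0)
    (hemb : ∀ g z : G, coeff (emb g) z = if z = g then 1 else 0) (f : E) (h z : G) :
    coeff (f * emb h) z = coeff f (z * h⁻¹) := by
  rw [hmul, finsum_eq_single _ (z * h⁻¹, h)]
  · simp [hemb]
  rintro ⟨a, b⟩ hab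
  by_cases hb : b = h
  · subst hb
    have hne : a * b ≠ z := fun hz => hab (by simp [← hz])
    simp [hne]
  · simp [hemb, hb]

theorem coeff_emb_mul [Semiring K] [Mul E]
    (hmul : ∀ f g : E, ∀ z : G, coeff (f * g) z =
      ∑ᶠ p : G × G, if p.1 * p.2 = z then coeff f p.1 * coeff g p.2 else 0)
    (hemb : ∀ g z : G, coeff (emb g) z = if z = g then 1 else 0) (f : E) (h z : G) :
    coeff (emb h * f) z = coeff f (h⁻¹ * z) := by
  rw [hmul, finsum_eq_single _ (h, h⁻¹ * z)]
  · simp [hemb]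
  rintro ⟨a, b⟩ hab
  by_cases ha : a = h
  · subst ha
    have hne : a * b ≠ z := fun hz => hab (by simp [← hz])
    simp [hne]
  · simp [hemb, ha]


theorem coeff_conj_of_commute [Semiring K] [Mul E]
    (hmul : ∀ f g : E, ∀ z : G, coeff (f * g) z =
      ∑ᶠ p : G × G, if p.1 * p.2 = z then coeff f p.1 * coeff g p.2 else 0)
    (hemb : ∀ g z : G, coeff (emb g) z = if z = g then 1 else 0) {c : E} {g : G}
    (hc : c * emb g = emb g * c) (w : G) : coeff c (g * w * g⁻¹) = coeff c w := by
  simpa [coeff_mul_emb hmul hemb, coeff_emb_mul hmul hemb, mul_assoc] using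
    congrArg (coeff · (g * w)) hc

theorem support_coeff_subset_center [Semiring K] [Mul E] [LinearOrder G]
    [CovariantClass G G (· * ·) (· ≤ ·)]
    [CovariantClass G G (Function.swap (· * ·)) (· ≤ ·)]
    (hmul : ∀ f g : E, ∀ z : G, coeff (f * g) z =
      ∑ᶠ p : G × G, if p.1 * p.2 = z then coeff f p.1 * coeff g p.2 else 0)
    (hemb : ∀ g z : G, coeff (emb g) z = if z = g then 1 else 0)
    (hwf : ∀ f : E, (support (coeff f)).IsWF) {c : E} (hc : ∀ g, c * emb g = emb g * c) :
    support (coeff c) ⊆ center G :=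
  support_subset_center_of_isWF (hwf c) fun g => coeff_conj_of_commute hmul hemb (hc g)

theorem eq_zero_of_sum_mul_emb_eq_zero [Ring K] [NonUnitalNonAssocSemiring E]
    (hext : Injective coeff) (hadd : ∀ f g : E, ∀ z : G, coeff (f + g) z = coeff f z + coeff g z)
    (hmul : ∀ f g : E, ∀ z : G, coeff (f * g) z =
      ∑ᶠ p : G × G, if p.1 * p.2 = z then coeff f p.1 * coeff g p.2 else 0)
    (hemb : ∀ g z : G, coeff (emb g) z = if z = g then 1 else 0)
    {ι : Type*} [Fintype ι] {c : ι → E} {s : ι → G}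
    (hs : Injective fun i => (s i : G ⧸ center G)) (hc : ∀ i, support (coeff (c i)) ⊆ center G)
    (hsum : ∑ i, c i * emb (s i) = 0) (i : ι) : c i = 0 := by
  let coeffAt (z : G) : E →+ K := AddMonoidHom.mk' (coeff · z) (hadd · · z)
  have hzero (z : G) : coeff 0 z = 0 := (coeffAt z).map_zero
  refine hext (funext fun w => ?_)
  rw [hzero]
  by_contra hw
  have hwc : w ∈ center G := hc i hw
  have hoff (j : ι) (hji : j ≠ i) : coeffAt (w * s i) (c j * emb (s j)) = 0 := by
    change coeff _ _ = 0
    rw [coeff_mul_emb hmul hemb]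
    by_contra hj
    have hdiv : s i / s j ∈ center G := by
      rw [div_eq_mul_inv, ← mul_mem_cancel_left hwc, ← mul_assoc]
      exact hc j hj
    exact hji (hs (QuotientGroup.eq_iff_div_mem.mpr hdiv)).symm
  have hcoeff : coeffAt (w * s i) (∑ j, c j * emb (s j)) = 0 := by
    rw [hsum, map_zero]
  rw [map_sum, Finset.sum_eq_single i (fun j _ hji => hoff j hji) (by simp)] at hcoeff
  exact hw (by simpa [coeffAt, coeff_mul_emb hmul hemb] using hcoeff)

end Coefficients

theorem ore_fraction_field_infinite_dimensional_over_center_general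
    (K G E : Type*) [DivisionRing K] [Group G] [LinearOrder G]
    [CovariantClass G G (· * ·) (· ≤ ·)]
    [CovariantClass G G (Function.swap (· * ·)) (· ≤ ·)]
    [DivisionRing E] (coeff : E → G → K)
    (hext : Function.Injective coeff)
    (hadd : ∀ f g : E, ∀ z : G, coeff (f + g) z = coeff f z + coeff g z)
    (hwf : ∀ f : E, (Function.support (coeff f)).IsWF)
    (hmul : ∀ f g : E, ∀ z : G, coeff (f * g) z =
      ∑ᶠ p : G × G, if p.1 * p.2 = z then coeff f p.1 * coeff g p.2 else 0)
    (κ : K →+* E)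
    (emb : G → E) (hemb : ∀ g z : G, coeff (emb g) z = if z = g then 1 else 0)
    (hG : ∃ x y : G, x * y ≠ y * x) :
    -- `D`, the division subring generated by `K[G]`, is infinite-dimensional over its
    -- centre: there are left linearly independent families of every finite size.
    ∀ n : ℕ, ∃ v : Fin n → E,
      (∀ i, v i ∈ Subfield.closure ((Subring.closure (Set.range ⇑κ ∪ Set.range emb) : Subring E) : Set E)) ∧
      ∀ c : Fin n → E,
        (∀ i, c i ∈ Subfield.closure ((Subring.closure (Set.range ⇑κ ∪ Set.range emb) : Subring E) : Set E) ∧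
          ∀ d ∈ Subfield.closure ((Subring.closure (Set.range ⇑κ ∪ Set.range emb) : Subring E) : Set E),
            c i * d = d * c i) →
        (∑ i, c i * v i = 0) → ∀ i, c i = 0 := by
  obtain ⟨x, y, hxy⟩ := hG
  have hx : x ∉ center G := fun hx => hxy (mem_center_iff.mp hx y).symm
  have hembD (g : G) : emb g ∈
      Subfield.closure ((Subring.closure (Set.range ⇑κ ∪ Set.range emb) : Subring E) : Set E) :=
    Subfield.subset_closure (Subring.subset_closure (Or.inr ⟨g, rfl⟩))
  intro n
  refine ⟨fun i => emb (x ^ (i : ℕ)), fun i => hembD _, fun c hc hsum => ?_⟩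
  have hcentral (i : Fin n) : support (coeff (c i)) ⊆ center G :=
    support_coeff_subset_center hmul hemb hwf fun g => (hc i).2 _ (hembD g)
  exact eq_zero_of_sum_mul_emb_eq_zero hext hadd hmul hemb
    ((injective_pow_mk_center hx).comp Fin.val_injective) hcentral hsum

/-- Let `K` be a division ring and `(G,<)` a nonabelian ordered group
such that the group ring `K[G]` (the subring of the Malcev-Neumann field `K((G,<))`
generated by `K` and `G`) is an Ore domain.  Then its Ore field of fractions
`D ⊆ K((G,<))` (the division subring generated by `K[G]`) is infinite-dimensional over
its centre. -/
theorem ore_fraction_field_infinite_dimensional_over_center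
    (K G E : Type*) [DivisionRing K] [Group G] [LinearOrder G]
    [CovariantClass G G (· * ·) (· ≤ ·)]
    [CovariantClass G G (Function.swap (· * ·)) (· ≤ ·)]
    [DivisionRing E] (coeff : E → G → K)
    (hext : Function.Injective coeff)
    (hadd : ∀ f g : E, ∀ z : G, coeff (f + g) z = coeff f z + coeff g z)
    (hwf : ∀ f : E, (Function.support (coeff f)).IsWF)
    (hsurj : ∀ F : G → K, (Function.support F).IsWF → ∃ f : E, coeff f = F)
    (hmul : ∀ f g : E, ∀ z : G, coeff (f * g) z =
      ∑ᶠ p : G × G, if p.1 * p.2 = z then coeff f p.1 * coeff g p.2 else 0)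
    (κ : K →+* E) (hκ : ∀ a : K, ∀ z : G, coeff (κ a) z = if z = 1 then a else 0)
    (emb : G → E) (hemb : ∀ g z : G, coeff (emb g) z = if z = g then 1 else 0)
    (hG : ∃ x y : G, x * y ≠ y * x)
    -- `K[G]` is a (right) Ore domain:
    (hOre : ∀ a b : E, a ∈ Subring.closure (Set.range ⇑κ ∪ Set.range emb) →
      b ∈ Subring.closure (Set.range ⇑κ ∪ Set.range emb) → b ≠ 0 →
      ∃ c ∈ Subring.closure (Set.range ⇑κ ∪ Set.range emb),
      ∃ d ∈ Subring.closure (Set.range ⇑κ ∪ Set.range emb), d ≠ 0 ∧ a * d = b * c) :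
    -- `D`, the division subring generated by `K[G]`, is infinite-dimensional over its
    -- centre: there are left linearly independent families of every finite size.
    ∀ n : ℕ, ∃ v : Fin n → E,
      (∀ i, v i ∈ Subfield.closure ((Subring.closure (Set.range ⇑κ ∪ Set.range emb) : Subring E) : Set E)) ∧
      ∀ c : Fin n → E,
        (∀ i, c i ∈ Subfield.closure ((Subring.closure (Set.range ⇑κ ∪ Set.range emb) : Subring E) : Set E) ∧
          ∀ d ∈ Subfield.closure ((Subring.closure (Set.range ⇑κ ∪ Set.range emb) : Subring E) : Set E),
            c i * d = d * c i) →
        (∑ i, c i * v i = 0) → ∀ i, c i = 0 :=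
  ore_fraction_field_infinite_dimensional_over_center_general K G E coeff hext hadd hwf hmul κ emb
    hemb hG
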